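/- (Minkowski inequality for positive operators.) Let X be a Banach lattice of measurable functions on a measure space (Ω,Σ,μ) and let G : X → X be a positive linear operator (i.e., Gh ≥ 0 a.e. whenever h ≥ 0 a.e.). Then for every 1 < p < ∞ and all measurable functions h₁, h₂ : Ω → ℝ with |h₁|^p ∈ X and |h₂|^p ∈ X, the pointwise a.e. inequality (G(|h₁+h₂|^p))^{1/p} ≤ (G(|h₁|^p))^{1/p} + (G(|h₂|^p))^{1/p} holds. -/

import Mathlib

open MeasureTheory

/-- A Banach lattice of (a.e.-equivalence classes of) real-valued measurable
functions on a measure space `(Ω, μ)`: a linear subspace of `Ω →ₘ[μ] ℝ` with a complete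
norm satisfying the lattice (ideal) property. -/
structure BanachFunctionLattice (Ω : Type*) [MeasurableSpace Ω] (μ : MeasureTheory.Measure Ω) where
  carrier : Set (Ω →ₘ[μ] ℝ)
  norm : (Ω →ₘ[μ] ℝ) → ℝ
  zero_mem : 0 ∈ carrier
  add_mem : ∀ {f g}, f ∈ carrier → g ∈ carrier → f + g ∈ carrier
  smul_mem : ∀ (c : ℝ) {f}, f ∈ carrier → c • f ∈ carrier
  norm_nonneg : ∀ f ∈ carrier, 0 ≤ norm f
  norm_eq_zero_iff : ∀ f ∈ carrier, (norm f = 0 ↔ f = 0)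
  norm_add_le : ∀ f ∈ carrier, ∀ g ∈ carrier, norm (f + g) ≤ norm f + norm g
  norm_smul : ∀ (c : ℝ), ∀ f ∈ carrier, norm (c • f) = |c| * norm f
  ideal_mem : ∀ f ∈ carrier, ∀ g : (Ω →ₘ[μ] ℝ), |g| ≤ |f| → g ∈ carrier
  ideal_norm_le : ∀ f ∈ carrier, ∀ g : (Ω →ₘ[μ] ℝ), |g| ≤ |f| → norm g ≤ norm f
  complete : ∀ u : ℕ → (Ω →ₘ[μ] ℝ), (∀ n, u n ∈ carrier) →
    (∀ ε > 0, ∃ N, ∀ m ≥ N, ∀ n ≥ N, norm (u m - u n) < ε) →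
    ∃ f ∈ carrier, ∀ ε > 0, ∃ N, ∀ n ≥ N, norm (u n - f) < ε

variable {Ω : Type*} [MeasurableSpace Ω] {μ : MeasureTheory.Measure Ω}

/-- The a.e.-equivalence class of `ω ↦ |f ω| ^ p` (real power). -/
noncomputable def absRpow (p : ℝ) (f : Ω →ₘ[μ] ℝ) : Ω →ₘ[μ] ℝ :=
  AEEqFun.mk (fun ω => |f ω| ^ p)
    (((by measurability : Measurable fun x : ℝ => |x| ^ p).comp_aemeasurable
      f.aemeasurable).aestronglyMeasurable)

/-- A (not necessarily complete) normed function space: the data of a carrier and a norm.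
Used to speak about `p`-convexifications without re-proving all the axioms. -/
structure FunctionSpace (Ω : Type*) [MeasurableSpace Ω] (μ : MeasureTheory.Measure Ω) where
  carrier : Set (Ω →ₘ[μ] ℝ)
  norm : (Ω →ₘ[μ] ℝ) → ℝ

/-- The carrier-and-norm data underlying a Banach function lattice. -/
def BanachFunctionLattice.toFunctionSpace (X : BanachFunctionLattice Ω μ) :
    FunctionSpace Ω μ := ⟨X.carrier, X.norm⟩

/-- The `p`-convexification `X^(p)`: all `f` with `|f|^p ∈ X`, with norm `‖|f|^p‖_X^(1/p)`. -/
noncomputable def pConv (X : BanachFunctionLattice Ω μ) (p : ℝ) : FunctionSpace Ω μ where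
  carrier := {f | absRpow p f ∈ X.carrier}
  norm := fun f => (X.norm (absRpow p f)) ^ (1 / p)

/-- The sum space `X₀ + X₁` (as a set). -/
def sumSet (A₀ A₁ : FunctionSpace Ω μ) : Set (Ω →ₘ[μ] ℝ) :=
  {f | ∃ a₀ ∈ A₀.carrier, ∃ a₁ ∈ A₁.carrier, f = a₀ + a₁}

/-- The Peetre `K`-functional `K(t, f; A₀, A₁)`. -/
noncomputable def Kfun (A₀ A₁ : FunctionSpace Ω μ) (t : ℝ) (f : Ω →ₘ[μ] ℝ) : ℝ :=
  sInf {r | ∃ a₀ ∈ A₀.carrier, ∃ a₁ ∈ A₁.carrier,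
    f = a₀ + a₁ ∧ r = A₀.norm a₀ + t * A₁.norm a₁}

/-- The norm of the sum space `X₀ + X₁`, namely `K(1, ·)`. -/
noncomputable def sumNorm (A₀ A₁ : FunctionSpace Ω μ) (f : Ω →ₘ[μ] ℝ) : ℝ :=
  Kfun A₀ A₁ 1 f

/-- The functional `D(t, f; A₀, A₁)`, the analogue of the `K`-functional restricted to
disjointly supported decompositions. -/
noncomputable def Dfun (A₀ A₁ : FunctionSpace Ω μ) (t : ℝ) (f : Ω →ₘ[μ] ℝ) : ℝ :=
  sInf {r | ∃ a₀ ∈ A₀.carrier, ∃ a₁ ∈ A₁.carrier,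
    f = a₀ + a₁ ∧ a₀ * a₁ = 0 ∧ r = A₀.norm a₀ + t * A₁.norm a₁}

/-- `T : (A₀, A₁) → (A₀, A₁)` is a bounded linear operator: `T` is linear on `A₀ + A₁`
and its restriction to each `Aⱼ` is a bounded operator from `Aⱼ` into itself. -/
def IsBoundedCoupleOperator (A₀ A₁ : FunctionSpace Ω μ) (T : (Ω →ₘ[μ] ℝ) → (Ω →ₘ[μ] ℝ)) :
    Prop :=
  (∀ f ∈ sumSet A₀ A₁, ∀ g ∈ sumSet A₀ A₁, T (f + g) = T f + T g) ∧
  (∀ (c : ℝ), ∀ f ∈ sumSet A₀ A₁, T (c • f) = c • T f) ∧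
  (∀ f ∈ A₀.carrier, T f ∈ A₀.carrier) ∧
  (∀ f ∈ A₁.carrier, T f ∈ A₁.carrier) ∧
  (∃ C₀ : ℝ, ∀ f ∈ A₀.carrier, A₀.norm (T f) ≤ C₀ * A₀.norm f) ∧
  (∃ C₁ : ℝ, ∀ f ∈ A₁.carrier, A₁.norm (T f) ≤ C₁ * A₁.norm f)

/-- `‖T‖_{Aⱼ → Aⱼ} ≤ C` for `j = 0, 1`. -/
def CoupleOperatorNormLE (A₀ A₁ : FunctionSpace Ω μ) (T : (Ω →ₘ[μ] ℝ) → (Ω →ₘ[μ] ℝ))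
    (C : ℝ) : Prop :=
  (∀ f ∈ A₀.carrier, A₀.norm (T f) ≤ C * A₀.norm f) ∧
  (∀ f ∈ A₁.carrier, A₁.norm (T f) ≤ C * A₁.norm f)

/-- `T` is a positive operator on `A₀ + A₁`. -/
def IsPositiveOn (A₀ A₁ : FunctionSpace Ω μ) (T : (Ω →ₘ[μ] ℝ) → (Ω →ₘ[μ] ℝ)) : Prop :=
  ∀ h ∈ sumSet A₀ A₁, 0 ≤ h → 0 ≤ T h

/-- `(A₀, A₁)` is a Calderón couple. -/
def IsCalderonCouple (A₀ A₁ : FunctionSpace Ω μ) : Prop :=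
  ∀ f ∈ sumSet A₀ A₁, ∀ g ∈ sumSet A₀ A₁,
    (∀ t > 0, Kfun A₀ A₁ t g ≤ Kfun A₀ A₁ t f) →
    ∃ T, IsBoundedCoupleOperator A₀ A₁ T ∧ T f = g

/-- `(A₀, A₁)` is a `C`-Calderón couple. -/
def IsCCalderonCouple (A₀ A₁ : FunctionSpace Ω μ) (C : ℝ) : Prop :=
  ∀ f ∈ sumSet A₀ A₁, ∀ g ∈ sumSet A₀ A₁,
    (∀ t > 0, Kfun A₀ A₁ t g ≤ Kfun A₀ A₁ t f) →
    ∃ T, IsBoundedCoupleOperator A₀ A₁ T ∧ T f = g ∧ CoupleOperatorNormLE A₀ A₁ T C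

/-- `(A₀, A₁)` is a positive Calderón couple. -/
def IsPositiveCalderonCouple (A₀ A₁ : FunctionSpace Ω μ) : Prop :=
  ∀ f ∈ sumSet A₀ A₁, ∀ g ∈ sumSet A₀ A₁, 0 ≤ f → 0 ≤ g →
    (∀ t > 0, Kfun A₀ A₁ t g ≤ Kfun A₀ A₁ t f) →
    ∃ T, IsBoundedCoupleOperator A₀ A₁ T ∧ IsPositiveOn A₀ A₁ T ∧ T f = g

/-- `(A₀, A₁)` is a positive `C`-Calderón couple. -/
def IsPositiveCCalderonCouple (A₀ A₁ : FunctionSpace Ω μ) (C : ℝ) : Prop :=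
  ∀ f ∈ sumSet A₀ A₁, ∀ g ∈ sumSet A₀ A₁, 0 ≤ f → 0 ≤ g →
    (∀ t > 0, Kfun A₀ A₁ t g ≤ Kfun A₀ A₁ t f) →
    ∃ T, IsBoundedCoupleOperator A₀ A₁ T ∧ IsPositiveOn A₀ A₁ T ∧ T f = g ∧
      CoupleOperatorNormLE A₀ A₁ T C

/-- A set `S` of (classes of) measurable functions has the Least Upper Bound Property:
every nonempty subset of `S` bounded above by an element of `S` has a least upper bound
in `S` (for the a.e. pointwise order). -/
def HasLUBP (S : Set (Ω →ₘ[μ] ℝ)) : Prop :=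
  ∀ A ⊆ S, A.Nonempty → (∃ b ∈ S, ∀ a ∈ A, a ≤ b) →
    ∃ y ∈ S, (∀ a ∈ A, a ≤ y) ∧ ∀ z ∈ S, (∀ a ∈ A, a ≤ z) → y ≤ z

/-! Convexity of `x ↦ x ^ p` gives, for every weight `t ∈ (0, 1)`, the pointwise bound
`|h₁ + h₂| ^ p ≤ t ^ (1 - p) |h₁| ^ p + (1 - t) ^ (1 - p) |h₂| ^ p`, and a positive linear
operator preserves it. Almost everywhere it then holds simultaneously for all rational `t`,
hence by continuity for all `t`. Finally `min_t (t ^ (1 - p) a + (1 - t) ^ (1 - p) b)` is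
`(a ^ (1/p) + b ^ (1/p)) ^ p`, attained at `t = a ^ (1/p) / (a ^ (1/p) + b ^ (1/p))`. -/

open Set

lemma add_rpow_le_weighted {p t u v : ℝ} (hp : 1 ≤ p) (hu : 0 ≤ u) (hv : 0 ≤ v)
    (ht : t ∈ Ioo (0 : ℝ) 1) :
    (u + v) ^ p ≤ t ^ (1 - p) * u ^ p + (1 - t) ^ (1 - p) * v ^ p := by
  have ht₀ : 0 < t := ht.1
  have ht₁ : 0 < 1 - t := sub_pos.2 ht.2
  have key := (convexOn_rpow hp).2 (x := u / t) (y := v / (1 - t))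
    (div_nonneg hu ht₀.le) (div_nonneg hv ht₁.le) ht₀.le ht₁.le (add_sub_cancel t 1)
  have hsum : t • (u / t) + (1 - t) • (v / (1 - t)) = u + v := by
    simp only [smul_eq_mul]; field_simp
  rw [hsum] at key
  refine key.trans_eq ?_
  simp only [smul_eq_mul]
  rw [Real.div_rpow hu ht₀.le, Real.div_rpow hv ht₁.le, Real.rpow_sub ht₀, Real.rpow_sub ht₁,
    Real.rpow_one, Real.rpow_one]
  ring

lemma rpow_inv_le_add_of_forall_le {p a b c : ℝ} (hp : 0 < p) (ha : 0 ≤ a) (hb : 0 ≤ b)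
    (hc : 0 ≤ c) (h : ∀ t ∈ Ioo (0 : ℝ) 1, c ≤ t ^ (1 - p) * a + (1 - t) ^ (1 - p) * b) :
    c ^ p⁻¹ ≤ a ^ p⁻¹ + b ^ p⁻¹ := by
  set A := a ^ p⁻¹
  set B := b ^ p⁻¹
  have hA : 0 ≤ A := by positivity
  have hB : 0 ≤ B := by positivity
  refine le_of_forall_pos_le_add fun δ hδ => ?_
  -- test `h` at `t = (A + ε) / (A + B + 2ε)`, a perturbation of the optimal weight `A / (A + B)`
  set ε := δ / 2
  set S := A + B + δ
  have hε : 0 < ε := by positivity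
  have hS : 0 < S := by positivity
  have hterm : ∀ {x X : ℝ}, 0 ≤ x → X = x ^ p⁻¹ →
      ((X + ε) / S) ^ (1 - p) * x ≤ (X + ε) * S ^ (p - 1) := by
    intro x X hx hX
    have hX0 : 0 ≤ X := hX ▸ by positivity
    have hxX : x ≤ (X + ε) ^ p := by
      calc x = X ^ p := by rw [hX, Real.rpow_inv_rpow hx hp.ne']
        _ ≤ (X + ε) ^ p := Real.rpow_le_rpow hX0 (by linarith) hp.le
    calc ((X + ε) / S) ^ (1 - p) * x ≤ ((X + ε) / S) ^ (1 - p) * (X + ε) ^ p := by gcongr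
      _ = (X + ε) * S ^ (p - 1) := by
        rw [Real.div_rpow (by linarith) hS.le, Real.rpow_sub (by linarith), Real.rpow_one,
          Real.rpow_sub hS, Real.rpow_one, Real.rpow_sub hS, Real.rpow_one]
        field_simp
  have ht : (A + ε) / S ∈ Ioo (0 : ℝ) 1 :=
    ⟨by positivity, (div_lt_one hS).2 (by simp only [S, ε]; linarith)⟩
  have h1t : 1 - (A + ε) / S = (B + ε) / S := by field_simp; ring
  have hcS : c ≤ S ^ p := by
    calc c ≤ _ := h _ ht
      _ ≤ (A + ε) * S ^ (p - 1) + (B + ε) * S ^ (p - 1) := by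
        rw [h1t]; exact add_le_add (hterm ha rfl) (hterm hb rfl)
      _ = S ^ p := by
        rw [← add_mul, Real.rpow_sub_one hS.ne']; field_simp; ring
  calc c ^ p⁻¹ ≤ (S ^ p) ^ p⁻¹ := Real.rpow_le_rpow hc hcS (by positivity)
    _ = A + B + δ := Real.rpow_rpow_inv hS.le hp.ne'

lemma forall_le_of_forall_rat_le {U : Set ℝ} (hU : IsOpen U) {F : ℝ → ℝ} (hF : ContinuousOn F U)
    {c : ℝ} (h : ∀ q : ℚ, (q : ℝ) ∈ U → c ≤ F q) : ∀ t ∈ U, c ≤ F t := by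
  intro t ht
  have hcl : t ∈ closure (U ∩ range ((↑) : ℚ → ℝ)) :=
    Rat.denseRange_cast.open_subset_closure_inter hU ht
  refine closure_minimal ?_ isClosed_Ici
    ((hF.continuousAt (hU.mem_nhds ht)).continuousWithinAt.mem_closure_image hcl)
  rintro _ ⟨_, ⟨hqU, q, rfl⟩, rfl⟩
  exact h q hqU

lemma continuousOn_weighted_rpow (p a b : ℝ) :
    ContinuousOn (fun t : ℝ => t ^ (1 - p) * a + (1 - t) ^ (1 - p) * b) (Ioo 0 1) := by
  refine ((continuousOn_id.rpow_const fun t ht => ?_).mul continuousOn_const).add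
    (((continuousOn_const.sub continuousOn_id).rpow_const fun t ht => ?_).mul continuousOn_const)
  · exact Or.inl ht.1.ne'
  · exact Or.inl (sub_pos.2 ht.2).ne'

namespace MeasureTheory.AEEqFun

lemma ae_nonneg {f : Ω →ₘ[μ] ℝ} (hf : 0 ≤ f) : ∀ᵐ ω ∂μ, 0 ≤ f ω := by
  filter_upwards [coeFn_le.2 hf, coeFn_zero (β := ℝ) (μ := μ)] with ω hω h0
  rwa [h0] at hω

instance {β : Type*} [TopologicalSpace β] [Preorder β] [Add β] [ContinuousAdd β]
    [AddLeftMono β] : AddLeftMono (Ω →ₘ[μ] β) where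
  elim f g h (hgh : g ≤ h) := by
    change f + g ≤ f + h
    rw [← coeFn_le] at hgh ⊢
    filter_upwards [hgh, coeFn_add f g, coeFn_add f h] with ω hω hg hh
    rw [hg, hh]
    exact add_le_add_right hω (f ω)

end MeasureTheory.AEEqFun

open AEEqFun

lemma coeFn_absRpow (p : ℝ) (f : Ω →ₘ[μ] ℝ) : absRpow p f =ᵐ[μ] fun ω => |f ω| ^ p :=
  coeFn_mk _ _

lemma absRpow_nonneg (p : ℝ) (f : Ω →ₘ[μ] ℝ) : 0 ≤ absRpow p f := by
  rw [← coeFn_le]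
  filter_upwards [coeFn_absRpow p f, coeFn_zero (β := ℝ) (μ := μ)] with ω hω h0
  rw [hω, h0]
  positivity

lemma absRpow_add_le {p t : ℝ} (hp : 1 ≤ p) (ht : t ∈ Ioo (0 : ℝ) 1) (f g : Ω →ₘ[μ] ℝ) :
    absRpow p (f + g) ≤ t ^ (1 - p) • absRpow p f + (1 - t) ^ (1 - p) • absRpow p g := by
  rw [← coeFn_le]
  filter_upwards [coeFn_absRpow p f, coeFn_absRpow p g, coeFn_absRpow p (f + g), coeFn_add f g,
    coeFn_add (t ^ (1 - p) • absRpow p f) ((1 - t) ^ (1 - p) • absRpow p g),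
    coeFn_smul (t ^ (1 - p)) (absRpow p f), coeFn_smul ((1 - t) ^ (1 - p)) (absRpow p g)]
    with ω hf hg hfg hadd hsum hsf hsg
  simp only [hf, hg, hfg, hadd, hsum, hsf, hsg, Pi.add_apply, Pi.smul_apply, smul_eq_mul]
  calc |f ω + g ω| ^ p ≤ (|f ω| + |g ω|) ^ p := by gcongr; exact abs_add_le _ _
    _ ≤ _ := add_rpow_le_weighted hp (abs_nonneg _) (abs_nonneg _) ht

lemma absRpow_inv_le_add_of_forall_rat_le {p : ℝ} (hp : 0 < p) {a b c : Ω →ₘ[μ] ℝ}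
    (ha : 0 ≤ a) (hb : 0 ≤ b) (hc : 0 ≤ c)
    (h : ∀ q : ℚ, (q : ℝ) ∈ Ioo (0 : ℝ) 1 →
      c ≤ (q : ℝ) ^ (1 - p) • a + (1 - (q : ℝ)) ^ (1 - p) • b) :
    absRpow p⁻¹ c ≤ absRpow p⁻¹ a + absRpow p⁻¹ b := by
  have hall : ∀ᵐ ω ∂μ, ∀ q : ℚ, (q : ℝ) ∈ Ioo (0 : ℝ) 1 →
      c ω ≤ (q : ℝ) ^ (1 - p) * a ω + (1 - (q : ℝ)) ^ (1 - p) * b ω := by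
    rw [ae_all_iff]
    intro q
    by_cases hq : (q : ℝ) ∈ Ioo (0 : ℝ) 1
    · filter_upwards [coeFn_le.2 (h q hq),
        coeFn_add ((q : ℝ) ^ (1 - p) • a) ((1 - (q : ℝ)) ^ (1 - p) • b),
        coeFn_smul ((q : ℝ) ^ (1 - p)) a, coeFn_smul ((1 - (q : ℝ)) ^ (1 - p)) b]
        with ω hω hsum hsa hsb _
      simpa only [hsum, hsa, hsb, Pi.add_apply, Pi.smul_apply, smul_eq_mul] using hω
    · exact Filter.Eventually.of_forall fun ω hq' => absurd hq' hq
  rw [← coeFn_le]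
  filter_upwards [hall, ae_nonneg ha, ae_nonneg hb, ae_nonneg hc, coeFn_absRpow p⁻¹ a,
    coeFn_absRpow p⁻¹ b, coeFn_absRpow p⁻¹ c, coeFn_add (absRpow p⁻¹ a) (absRpow p⁻¹ b)]
    with ω hω ha' hb' hc' hpa hpb hpc hsum
  rw [hpc, hsum, Pi.add_apply, hpa, hpb, abs_of_nonneg ha', abs_of_nonneg hb', abs_of_nonneg hc']
  exact rpow_inv_le_add_of_forall_le hp ha' hb' hc'
    (forall_le_of_forall_rat_le isOpen_Ioo (continuousOn_weighted_rpow p _ _) hω)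

namespace BanachFunctionLattice

variable (X : BanachFunctionLattice Ω μ)

lemma mem_of_nonneg_of_le {f g : Ω →ₘ[μ] ℝ} (hf : f ∈ X.carrier) (hg : 0 ≤ g) (hgf : g ≤ f) :
    g ∈ X.carrier :=
  X.ideal_mem f hf g (by rwa [abs_of_nonneg hg, abs_of_nonneg (hg.trans hgf)])

lemma sub_mem {f g : Ω →ₘ[μ] ℝ} (hf : f ∈ X.carrier) (hg : g ∈ X.carrier) :
    f - g ∈ X.carrier := by
  simpa only [neg_one_smul, sub_eq_add_neg] using X.add_mem hf (X.smul_mem (-1) hg)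

lemma absRpow_add_mem {p : ℝ} (hp : 1 ≤ p) {f g : Ω →ₘ[μ] ℝ} (hf : absRpow p f ∈ X.carrier)
    (hg : absRpow p g ∈ X.carrier) : absRpow p (f + g) ∈ X.carrier :=
  X.mem_of_nonneg_of_le (X.add_mem (X.smul_mem _ hf) (X.smul_mem _ hg)) (absRpow_nonneg p _)
    (absRpow_add_le hp ⟨one_half_pos, one_half_lt_one⟩ f g)

variable {X} {G : (Ω →ₘ[μ] ℝ) → (Ω →ₘ[μ] ℝ)}

lemma map_mono (hadd : ∀ f ∈ X.carrier, ∀ g ∈ X.carrier, G (f + g) = G f + G g)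
    (hpos : ∀ f ∈ X.carrier, 0 ≤ f → 0 ≤ G f) {f g : Ω →ₘ[μ] ℝ} (hf : f ∈ X.carrier)
    (hg : g ∈ X.carrier) (hfg : f ≤ g) : G f ≤ G g := by
  have hgf := X.sub_mem hg hf
  rw [← add_sub_cancel f g, hadd f hf _ hgf]
  exact le_add_of_nonneg_right (hpos _ hgf (sub_nonneg.2 hfg))

lemma map_absRpow_add_le (hadd : ∀ f ∈ X.carrier, ∀ g ∈ X.carrier, G (f + g) = G f + G g)
    (hsmul : ∀ (c : ℝ), ∀ f ∈ X.carrier, G (c • f) = c • G f)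
    (hpos : ∀ f ∈ X.carrier, 0 ≤ f → 0 ≤ G f) {p t : ℝ} (hp : 1 ≤ p) (ht : t ∈ Ioo (0 : ℝ) 1)
    {f g : Ω →ₘ[μ] ℝ} (hf : absRpow p f ∈ X.carrier) (hg : absRpow p g ∈ X.carrier) :
    G (absRpow p (f + g)) ≤
      t ^ (1 - p) • G (absRpow p f) + (1 - t) ^ (1 - p) • G (absRpow p g) := by
  have hf' := X.smul_mem (t ^ (1 - p)) hf
  have hg' := X.smul_mem ((1 - t) ^ (1 - p)) hg
  rw [← hsmul _ _ hf, ← hsmul _ _ hg, ← hadd _ hf' _ hg']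
  exact map_mono hadd hpos (X.absRpow_add_mem hp hf hg) (X.add_mem hf' hg')
    (absRpow_add_le hp ht f g)

end BanachFunctionLattice

theorem minkowski_for_positive_operators_general
    (X : BanachFunctionLattice Ω μ) (G : (Ω →ₘ[μ] ℝ) → (Ω →ₘ[μ] ℝ))
    (hadd : ∀ f ∈ X.carrier, ∀ g ∈ X.carrier, G (f + g) = G f + G g)
    (hsmul : ∀ (c : ℝ), ∀ f ∈ X.carrier, G (c • f) = c • G f)
    (hposG : ∀ f ∈ X.carrier, 0 ≤ f → 0 ≤ G f)
    (p : ℝ) (hp : 1 < p) (h₁ h₂ : Ω →ₘ[μ] ℝ)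
    (hh₁ : absRpow p h₁ ∈ X.carrier) (hh₂ : absRpow p h₂ ∈ X.carrier) :
    absRpow (1 / p) (G (absRpow p (h₁ + h₂)))
      ≤ absRpow (1 / p) (G (absRpow p h₁)) + absRpow (1 / p) (G (absRpow p h₂)) := by
  rw [one_div]
  exact absRpow_inv_le_add_of_forall_rat_le (by linarith)
    (hposG _ hh₁ (absRpow_nonneg p h₁)) (hposG _ hh₂ (absRpow_nonneg p h₂))
    (hposG _ (X.absRpow_add_mem hp.le hh₁ hh₂) (absRpow_nonneg p _))
    fun q hq => BanachFunctionLattice.map_absRpow_add_le hadd hsmul hposG hp.le hq hh₁ hh₂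

/-- **Minkowski inequality for positive operators.** If `G : X → X` is a
positive linear operator on a Banach lattice of measurable functions `X`, then for every
`1 < p < ∞` and all measurable `h₁, h₂` with `|h₁|^p, |h₂|^p ∈ X` one has, pointwise a.e.,
`(G(|h₁ + h₂|^p))^(1/p) ≤ (G(|h₁|^p))^(1/p) + (G(|h₂|^p))^(1/p)`. -/
theorem minkowski_for_positive_operators
    (X : BanachFunctionLattice Ω μ) (G : (Ω →ₘ[μ] ℝ) → (Ω →ₘ[μ] ℝ))
    (hmaps : ∀ f ∈ X.carrier, G f ∈ X.carrier)
    (hadd : ∀ f ∈ X.carrier, ∀ g ∈ X.carrier, G (f + g) = G f + G g)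
    (hsmul : ∀ (c : ℝ), ∀ f ∈ X.carrier, G (c • f) = c • G f)
    (hposG : ∀ f ∈ X.carrier, 0 ≤ f → 0 ≤ G f)
    (p : ℝ) (hp : 1 < p) (h₁ h₂ : Ω →ₘ[μ] ℝ)
    (hh₁ : absRpow p h₁ ∈ X.carrier) (hh₂ : absRpow p h₂ ∈ X.carrier) :
    absRpow (1 / p) (G (absRpow p (h₁ + h₂)))
      ≤ absRpow (1 / p) (G (absRpow p h₁)) + absRpow (1 / p) (G (absRpow p h₂)) :=
  minkowski_for_positive_operators_general X G hadd hsmul hposG p hp h₁ h₂ hh₁ hh₂
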